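/- Let R be a Noetherian domain whose integral closure R' in its fraction field is a finite R-module, and assume that for every height-1 prime P' of R', the contraction P' ∩ R has height 1 in R. Then R', regarded as an R-module, satisfies Serre's condition S2; in particular, for every prime p ⊆ R of height ≥ 2, depth_{R_p} (R')_p ≥ 2. -/

import Mathlib

universe u
set_option synthInstance.maxHeartbeats 1000000
set_option maxHeartbeats 1000000

/-- `depthGE R J M n` : there is a weakly regular sequence on `M` of length `n` with entries
in `J`.  For a Noetherian local ring `R` and a finite module `M` with `J • M ≠ M` this says
exactly `depth_J M ≥ n` (and the zero module has depth `+∞`, so `depthGE` always holds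
for it, matching the usual convention). -/
def depthGE (R : Type u) [CommRing R] (J : Ideal R)
    (M : Type u) [AddCommGroup M] [Module R M] (n : ℕ) : Prop :=
  ∃ rs : List R, rs.length = n ∧ (∀ r ∈ rs, r ∈ J) ∧
    RingTheory.Sequence.IsWeaklyRegular M rs

/-- The (Krull) dimension of a module: `dim (R / ann M)`. -/
noncomputable def moduleKrullDim (R : Type u) [CommRing R]
    (M : Type u) [AddCommGroup M] [Module R M] : WithBot ℕ∞ :=
  ringKrullDim (R ⧸ Module.annihilator R M)

/-- Serre's condition `S2` for a finite module over a Noetherian ring: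
`depth_{R_p} M_p ≥ min (2, dim M_p)` for every prime `p` in the support of `M`. -/
def IsS2 (R : Type u) [CommRing R] (M : Type u) [AddCommGroup M] [Module R M] : Prop :=
  ∀ p ∈ Module.support R M, ∀ n : ℕ,
    (n : WithBot ℕ∞) ≤ min 2 (moduleKrullDim (Localization.AtPrime p.asIdeal)
        (LocalizedModule p.asIdeal.primeCompl M)) →
      depthGE (Localization.AtPrime p.asIdeal)
        (IsLocalRing.maximalIdeal (Localization.AtPrime p.asIdeal))
        (LocalizedModule p.asIdeal.primeCompl M) n

/-!
Write `A` for `R'`, a Noetherian integrally closed domain. Let `Q = (xA : y)` be an associated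
prime of `A/xA` with `x ≠ 0`, and `w = y/x`, so `wQ ⊆ A`. If `wQ ⊆ Q`, then `w` is integral over
`A`, hence `y ∈ xA`, which is absurd; so some `t ∈ Q` has `u = wt ∉ Q`, and `Qu ⊆ tA` makes `Q`
minimal over `tA`. By Krull's principal ideal theorem `Q` has height one.

Given `p ⊆ R` of height `≥ 2` and `0 ≠ x ∈ p`, the associated primes of `A/xA` contract to
height-one primes of `R`, none of which contains `p`. Prime avoidance yields `y ∈ p` outside all of
them, so `x, y` is an `A`-regular sequence in `p`, and it stays regular on `A_p`. As
`dim A_p ≤ ht p`, this is `S2`.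
-/

open RingTheory.Sequence IsLocalRing Pointwise

section Localization

variable {R M : Type u} [CommRing R] [AddCommGroup M] [Module R M] (p : Ideal R) [p.IsPrime]

theorem depthGE_localizedModule_of_isWeaklyRegular {rs : List R} (hreg : IsWeaklyRegular M rs)
    (hmem : ∀ r ∈ rs, r ∈ p) :
    depthGE (Localization.AtPrime p) (maximalIdeal (Localization.AtPrime p))
      (LocalizedModule p.primeCompl M) rs.length := by
  refine ⟨rs.map (algebraMap R _), List.length_map _, ?_,
    hreg.of_isLocalizedModule _ p.primeCompl (LocalizedModule.mkLinearMap p.primeCompl M)⟩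
  simp only [List.mem_map, forall_exists_index, and_imp, forall_apply_eq_imp_iff₂]
  exact fun r hr => (IsLocalization.AtPrime.to_map_mem_maximal_iff _ p r).mpr (hmem r hr)

theorem moduleKrullDim_atPrime_le_height (N : Type u) [AddCommGroup N]
    [Module (Localization.AtPrime p) N] :
    moduleKrullDim (Localization.AtPrime p) N ≤ p.height :=
  (ringKrullDim_quotient_le _).trans (IsLocalization.AtPrime.ringKrullDim_eq_height p _).le

end Localization

theorem Ideal.mem_minimalPrimes_span_singleton_of_mul_mem {A : Type*} [CommRing A]
    {Q : Ideal A} [hQ : Q.IsPrime] {t u : A} (ht : t ∈ Q) (hu : u ∉ Q)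
    (hQu : ∀ s ∈ Q, s * u ∈ Ideal.span {t}) :
    Q ∈ (Ideal.span {t}).minimalPrimes :=
  ⟨⟨hQ, (Ideal.span_singleton_le_iff_mem Q).mpr ht⟩, fun _ ⟨hP, htP⟩ hPQ s hs =>
    (hP.mem_or_mem (htP (hQu s hs))).resolve_right fun h => hu (hPQ h)⟩

theorem IsIntegrallyClosed.exists_algebraMap_eq_or_exists_mul_mem_span {A K : Type*}
    [CommRing A] [IsIntegrallyClosed A] [Field K] [Algebra A K] [IsFractionRing A K]
    {Q : Ideal A} (hQ : Q ≠ ⊥) (hQfg : Q.FG) {w : K}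
    (hw : ∀ s ∈ Q, ∃ d : A, algebraMap A K d = w * algebraMap A K s) :
    (∃ a : A, algebraMap A K a = w) ∨ ∃ t ∈ Q, ∃ u ∉ Q, ∀ s ∈ Q, s * u ∈ Ideal.span {t} := by
  by_cases hstable : ∀ s ∈ Q, ∀ d : A, algebraMap A K d = w * algebraMap A K s → d ∈ Q
  · left
    refine IsIntegrallyClosed.isIntegral_iff.mp <| isIntegral_of_smul_mem_submodule
      (Submodule.map (Algebra.linearMap A K) Q) ?_ (Submodule.FG.map _ hQfg) w ?_
    · simpa using (Submodule.map_injective_of_injective (f := Algebra.linearMap A K)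
        (IsFractionRing.injective A K)).ne hQ
    · rintro _ ⟨s, hs, rfl⟩
      obtain ⟨d, hd⟩ := hw s hs
      exact ⟨d, hstable s hs d hd, hd⟩
  · right
    push Not at hstable
    obtain ⟨t, ht, u, hut, hu⟩ := hstable
    refine ⟨t, ht, u, hu, fun s hs => ?_⟩
    obtain ⟨d, hd⟩ := hw s hs
    refine Ideal.mem_span_singleton'.mpr ⟨d, IsFractionRing.injective A K ?_⟩
    simp only [map_mul, hd, hut]
    ring

section AssociatedPrimes

variable {A : Type*} [CommRing A] [IsDomain A] [IsNoetherianRing A]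

theorem IsAssociatedPrime.exists_mul_mem_span_of_quotSMulTop [IsIntegrallyClosed A] {x : A}
    (hx : x ≠ 0) {Q : Ideal A} (hQ : IsAssociatedPrime Q (QuotSMulTop x A)) :
    x ∈ Q ∧ ∃ t ∈ Q, ∃ u ∉ Q, ∀ s ∈ Q, s * u ∈ Ideal.span {t} := by
  obtain ⟨hQp, m, hm⟩ := isAssociatedPrime_iff.mp hQ
  obtain ⟨y, rfl⟩ := Submodule.Quotient.mk_surjective _ m
  have mem_Q : ∀ s, s ∈ Q ↔ ∃ d : A, x * d = s * y := by
    intro s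
    rw [hm, Submodule.mem_colon_singleton, Submodule.mem_bot, ← Submodule.Quotient.mk_smul,
      Submodule.Quotient.mk_eq_zero, Submodule.mem_smul_pointwise_iff_exists]
    simp only [Submodule.mem_top, smul_eq_mul, true_and]
  have hxQ : x ∈ Q := (mem_Q x).mpr ⟨y, rfl⟩
  refine ⟨hxQ, ?_⟩
  set K := FractionRing A
  have hxK : algebraMap A K x ≠ 0 := by simpa using hx
  have hQ : Q ≠ ⊥ := fun h => hx (by simpa [h] using hxQ)
  refine (IsIntegrallyClosed.exists_algebraMap_eq_or_exists_mul_mem_span hQ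
      (IsNoetherian.noetherian _) (w := algebraMap A K y / algebraMap A K x)
      fun s hs => ?_).resolve_left ?_
  · obtain ⟨d, hd⟩ := (mem_Q s).mp hs
    refine ⟨d, ?_⟩
    rw [div_mul_eq_mul_div, eq_div_iff hxK, mul_comm, ← map_mul, hd, map_mul, mul_comm]
  · rintro ⟨a, ha⟩
    refine hQp.ne_top ((Ideal.eq_top_iff_one _).mpr ((mem_Q 1).mpr ⟨a, ?_⟩))
    refine IsFractionRing.injective A K ?_
    rw [map_mul, ha, one_mul, mul_div_cancel₀ _ hxK]

theorem IsAssociatedPrime.height_eq_one_of_quotSMulTop [IsIntegrallyClosed A] {x : A}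
    (hx : x ≠ 0) {Q : Ideal A} (hQ : IsAssociatedPrime Q (QuotSMulTop x A)) : Q.height = 1 := by
  have := hQ.isPrime
  obtain ⟨hxQ, t, ht, u, hu, hQu⟩ := hQ.exists_mul_mem_span_of_quotSMulTop hx
  refine le_antisymm (Ideal.height_le_one_of_isPrincipal_of_mem_minimalPrimes _ _
    (Ideal.mem_minimalPrimes_span_singleton_of_mul_mem ht hu hQu)) ?_
  rw [Order.one_le_iff_ne_zero, Ne, Ideal.height_eq_zero_iff_eq_bot]
  exact fun h => hx (by simpa [h] using hxQ)

theorem isWeaklyRegular_pair_of_forall_notMem_associatedPrimes {x y : A} (hx : x ≠ 0)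
    (hy : ∀ Q ∈ associatedPrimes A (QuotSMulTop x A), y ∉ Q) : IsWeaklyRegular A [x, y] := by
  refine .cons (.of_ne_zero hx) (.cons ?_ (.nil _ _))
  by_contra hreg
  have : y ∈ ⋃ Q ∈ associatedPrimes A (QuotSMulTop x A), (Q : Set A) := by
    rw [biUnion_associatedPrimes_eq_compl_regular]
    exact hreg
  obtain ⟨Q, hQ, hyQ⟩ := Set.mem_iUnion₂.mp this
  exact hy Q hQ hyQ

end AssociatedPrimes

theorem exists_mem_algebraMap_ne_zero_of_one_le_height {R A : Type*} [CommRing R] [CommRing A]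
    [Nontrivial A] [Algebra R A] [FaithfulSMul R A] {p : Ideal R} (hp : 1 ≤ p.height) :
    ∃ x ∈ p, algebraMap R A x ≠ 0 := by
  have := Module.nontrivial R A
  have hp : p ≠ ⊥ := fun h => by simp [h, Ideal.height_bot] at hp
  obtain ⟨x, hxp, hx⟩ := Submodule.exists_mem_ne_zero_of_ne_bot hp
  exact ⟨x, hxp, (map_ne_zero_iff _ (FaithfulSMul.algebraMap_injective R A)).mpr hx⟩

section HeightOneContraction

variable {R A : Type u} [CommRing R] [CommRing A] [IsDomain A] [IsNoetherianRing A]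
  [IsIntegrallyClosed A] [Algebra R A] [FaithfulSMul R A] (p : Ideal R)
  (hht : ∀ P : Ideal A, P.IsPrime → P.height = 1 → (P.comap (algebraMap R A)).height = 1)
include hht

theorem exists_isWeaklyRegular_pair_of_two_le_height (hp : 2 ≤ p.height) :
    ∃ x ∈ p, ∃ y ∈ p, IsWeaklyRegular A [x, y] := by
  obtain ⟨x, hxp, hx⟩ :=
    exists_mem_algebraMap_ne_zero_of_one_le_height (A := A) (le_trans (by norm_num) hp)
  set S := associatedPrimes A (QuotSMulTop (algebraMap R A x) A)
  have not_le_comap : ∀ Q ∈ S, ¬p ≤ Q.comap (algebraMap R A) := fun Q hQ hpQ => by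
    have h1 := hht Q hQ.isPrime (IsAssociatedPrime.height_eq_one_of_quotSMulTop hx hQ)
    have := hp.trans ((Ideal.height_mono hpQ).trans_eq h1)
    norm_num at this
  have not_subset : ¬(p : Set R) ⊆ ⋃ Q ∈ S, Q.comap (algebraMap R A) := fun h => by
    obtain ⟨Q, hQ, hpQ⟩ := (Ideal.subset_union_prime_finite (associatedPrimes.finite A _) ⊥ ⊥
      fun Q hQ _ _ => have := hQ.isPrime; Ideal.IsPrime.comap _).mp h
    exact not_le_comap Q hQ hpQ
  obtain ⟨y, hyp, hy⟩ := Set.not_subset.mp not_subset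
  refine ⟨x, hxp, y, hyp, (isWeaklyRegular_map_algebraMap_iff A A _).mp ?_⟩
  exact isWeaklyRegular_pair_of_forall_notMem_associatedPrimes hx
    fun Q hQ hyQ => hy (Set.mem_biUnion hQ hyQ)

theorem depthGE_localizedModule_of_le_height [p.IsPrime] {n : ℕ} (hn2 : n ≤ 2) (hnp : n ≤ p.height) :
    depthGE (Localization.AtPrime p) (maximalIdeal (Localization.AtPrime p))
      (LocalizedModule p.primeCompl A) n := by
  suffices ∃ rs : List R, rs.length = n ∧ (∀ r ∈ rs, r ∈ p) ∧ IsWeaklyRegular A rs by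
    obtain ⟨rs, rfl, hmem, hreg⟩ := this
    exact depthGE_localizedModule_of_isWeaklyRegular p hreg hmem
  interval_cases n
  · exact ⟨[], rfl, by simp, .nil _ _⟩
  · obtain ⟨x, hxp, hx⟩ := exists_mem_algebraMap_ne_zero_of_one_le_height (A := A) hnp
    exact ⟨[x], rfl, by simpa using hxp,
      (isWeaklyRegular_map_algebraMap_iff A A [x]).mp (.cons (.of_ne_zero hx) (.nil _ _))⟩
  · obtain ⟨x, hxp, y, hyp, hreg⟩ := exists_isWeaklyRegular_pair_of_two_le_height p hht hnp
    exact ⟨[x, y], rfl, by simp [hxp, hyp], hreg⟩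

end HeightOneContraction

/-- Let `R` be a Noetherian domain whose integral closure `R'` in its fraction field is a
finite `R`-module, such that every height-1 prime of `R'` contracts to a height-1 prime of
`R`.  Then `R'`, as an `R`-module, satisfies Serre's condition `S2`; in particular for every
prime `p ⊆ R` of height ≥ 2 one has `depth_{R_p} (R')_p ≥ 2`. -/
theorem integral_closure_isS2
    (R : Type u) [CommRing R] [IsDomain R] [IsNoetherianRing R]
    (hfin : Module.Finite R (integralClosure R (FractionRing R)))
    (hht : ∀ P' : PrimeSpectrum (integralClosure R (FractionRing R)),
      Order.height P' = 1 →
        Order.height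
          (PrimeSpectrum.comap (algebraMap R (integralClosure R (FractionRing R))) P') = 1) :
    IsS2 R (integralClosure R (FractionRing R)) ∧
      ∀ p : PrimeSpectrum R, 2 ≤ Order.height p →
        depthGE (Localization.AtPrime p.asIdeal)
          (IsLocalRing.maximalIdeal (Localization.AtPrime p.asIdeal))
          (LocalizedModule p.asIdeal.primeCompl (integralClosure R (FractionRing R))) 2 := by
  have : IsNoetherianRing (integralClosure R (FractionRing R)) := .of_finite R _
  have : IsIntegrallyClosed (integralClosure R (FractionRing R)) :=
    integralClosure.isIntegrallyClosedOfFiniteExtension (FractionRing R)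
  have hht' : ∀ P : Ideal (integralClosure R (FractionRing R)), P.IsPrime → P.height = 1 →
      (P.comap (algebraMap R _)).height = 1 := fun P hP h => by
    have := hht ⟨P, hP⟩ (by rwa [← PrimeSpectrum.height_eq_orderHeight])
    rwa [← PrimeSpectrum.height_eq_orderHeight] at this
  refine ⟨fun p _ n hn => ?_, fun p hp => depthGE_localizedModule_of_le_height p.asIdeal hht'
    le_rfl (by rwa [PrimeSpectrum.height_eq_orderHeight])⟩
  have hdim := moduleKrullDim_atPrime_le_height p.asIdeal
    (LocalizedModule p.asIdeal.primeCompl (integralClosure R (FractionRing R)))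
  refine depthGE_localizedModule_of_le_height p.asIdeal hht' ?_ ?_
  · exact_mod_cast hn.trans (min_le_left _ _)
  · exact_mod_cast hn.trans ((min_le_right _ _).trans hdim)
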